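/- arXiv:1802.05364 — 7 statements merged into one kernel-verified Lean document; each statement's English description precedes it below -/
import Mathlib

section
/- Let X be an ordered Banach space and let x ∈ X with x ≠ 0. Then there exists a positive continuous linear functional x' on X with ⟨x', x⟩ ≠ 0. -/
private lemma aux_sep {X : Type*} [NormedAddCommGroup X] [NormedSpace ℝ X]
    (C : Set X) (hclosed : IsClosed C)
    (hsmul : ∀ (α : ℝ), 0 ≤ α → ∀ x ∈ C, α • x ∈ C)
    (hconvex : Convex ℝ C) (h0 : (0 : X) ∈ C)
    {z : X} (hz : z ∉ C) :
    ∃ f : X →L[ℝ] ℝ, (∀ y ∈ C, 0 ≤ f y) ∧ f z < 0 := by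
  obtain ⟨f, u, hfz, hfC⟩ := geometric_hahn_banach_point_closed hconvex hclosed hz
  have hu0 : u < 0 := by simpa using hfC 0 h0
  refine ⟨f, ?_, lt_trans hfz hu0⟩
  intro y hy
  by_contra hneg
  push_neg at hneg
  have hα : 0 ≤ (u - 1) / f y := by
    exact le_of_lt (div_pos_of_neg_of_neg (by linarith) hneg)
  have := hfC _ (hsmul _ hα y hy)
  rw [map_smul, smul_eq_mul, div_mul_cancel₀] at this
  · linarith
  · linarith

theorem exists_positive_functional_not_annihilating
    {X : Type*} [NormedAddCommGroup X] [NormedSpace ℝ X]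
    (C : Set X) (hclosed : IsClosed C)
    (hadd : ∀ x ∈ C, ∀ y ∈ C, x + y ∈ C)
    (hsmul : ∀ (α : ℝ), 0 ≤ α → ∀ x ∈ C, α • x ∈ C)
    (hconvex : Convex ℝ C)
    (hproper : C ∩ (-C) = {0}) :
    ∀ x : X, x ≠ 0 → ∃ x' : X →L[ℝ] ℝ, (∀ y ∈ C, 0 ≤ x' y) ∧ x' x ≠ 0 := by
  have h0 : (0 : X) ∈ C := by
    have : (0 : X) ∈ C ∩ (-C) := by rw [hproper]; rfl
    exact this.1
  intro x hx
  by_cases hxC : x ∈ C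
  · have hnx : -x ∉ C := by
      intro hnxC
      have : x ∈ C ∩ (-C) := ⟨hxC, by simpa using hnxC⟩
      rw [hproper] at this
      exact hx this
    obtain ⟨f, hf, hfz⟩ := aux_sep C hclosed hsmul hconvex h0 hnx
    exact ⟨f, hf, by simp at hfz; intro h; rw [h] at hfz; exact absurd hfz (lt_irrefl 0)⟩
  · obtain ⟨f, hf, hfz⟩ := aux_sep C hclosed hsmul hconvex h0 hxC
    exact ⟨f, hf, ne_of_lt hfz⟩
end

section
/- Let X be an ordered Banach space with generating cone (X₊ − X₊ = X), and let P, Q ∈ L(X) be two band projections (i.e. projections such that both P and id − P, respectively Q and id − Q, are positive) with the same range. Then P = Q. -/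
theorem band_projections_with_same_range_eq
    {X : Type*} [NormedAddCommGroup X] [NormedSpace ℝ X]
    (C : Set X) (hclosed : IsClosed C)
    (hadd : ∀ x ∈ C, ∀ y ∈ C, x + y ∈ C)
    (hsmul : ∀ (α : ℝ), 0 ≤ α → ∀ x ∈ C, α • x ∈ C)
    (hconvex : Convex ℝ C)
    (hproper : C ∩ (-C) = {0})
    (hgen : ∀ x : X, ∃ y ∈ C, ∃ z ∈ C, x = y - z)
    (P Q : X →L[ℝ] X)
    (hP : ∀ x, P (P x) = P x) (hQ : ∀ x, Q (Q x) = Q x)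
    (hPpos : ∀ x ∈ C, P x ∈ C) (hPcpos : ∀ x ∈ C, x - P x ∈ C)
    (hQpos : ∀ x ∈ C, Q x ∈ C) (hQcpos : ∀ x ∈ C, x - Q x ∈ C)
    (hrange : Set.range P = Set.range Q) :
    P = Q := by
  have hPfix : ∀ x, P (Q x) = Q x := by
    intro x
    have hm : Q x ∈ Set.range P := by rw [hrange]; exact ⟨x, rfl⟩
    obtain ⟨y, hy⟩ := hm
    rw [← hy, hP]
  have hQfix : ∀ x, Q (P x) = P x := by
    intro x
    have hm : P x ∈ Set.range Q := by rw [← hrange]; exact ⟨x, rfl⟩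
    obtain ⟨y, hy⟩ := hm
    rw [← hy, hQ]
  have key : ∀ x ∈ C, P x = Q x := by
    intro x hx
    have h1 : P x - Q x ∈ C := by
      have := hPpos _ (hQcpos x hx)
      simpa [map_sub, hPfix] using this
    have h2 : Q x - P x ∈ C := by
      have := hQpos _ (hPcpos x hx)
      simpa [map_sub, hQfix] using this
    have hmem : P x - Q x ∈ C ∩ (-C) := ⟨h1, by simpa [Set.mem_neg, neg_sub] using h2⟩
    rw [hproper] at hmem
    exact sub_eq_zero.mp (Set.mem_singleton_iff.mp hmem)
  ext x
  obtain ⟨y, hy, z, hz, rfl⟩ := hgen x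
  simp [map_sub, key y hy, key z hz]
end

section
/- Let X be an ordered Banach space with generating cone whose norm is additive on the positive cone (‖x + y‖ = ‖x‖ + ‖y‖ for x, y ∈ X₊), i.e. an AN-space. Then there is a unique positive continuous linear functional 𝟙 ∈ X' with ⟨𝟙, x⟩ = ‖x‖ for all x ∈ X₊, and if X ≠ {0} then ‖𝟙‖ = 1. -/
/-! Every `x` is a difference `y - z` of positive vectors, and additivity of the norm on the cone
makes `‖y‖ - ‖z‖` independent of the decomposition: `y - z = y' - z'` gives `y + z' = y' + z`,
hence `‖y‖ + ‖z'‖ = ‖y'‖ + ‖z‖`. This defines a linear functional `𝟙` equal to the norm on the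
cone, and it is the only candidate since the cone generates `X`. The reverse triangle inequality
`|‖y‖ - ‖z‖| ≤ ‖y - z‖` gives `‖𝟙‖ ≤ 1`, with equality at any nonzero positive vector. -/

section AdditiveNormCone

variable {X : Type*} [NormedAddCommGroup X] {C : Set X}

theorem norm_sub_norm_eq_of_sub_eq (haddnorm : ∀ x ∈ C, ∀ y ∈ C, ‖x + y‖ = ‖x‖ + ‖y‖)
    {a b a' b' : X} (ha : a ∈ C) (hb : b ∈ C) (ha' : a' ∈ C) (hb' : b' ∈ C)
    (h : a - b = a' - b') : ‖a‖ - ‖b‖ = ‖a'‖ - ‖b'‖ := by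
  have hsum : ‖a‖ + ‖b'‖ = ‖a'‖ + ‖b‖ := by
    rw [← haddnorm a ha b' hb', ← haddnorm a' ha' b hb, sub_eq_sub_iff_add_eq_add.mp h]
  linarith

theorem exists_eq_norm_sub_norm (hgen : ∀ x : X, ∃ y ∈ C, ∃ z ∈ C, x = y - z)
    (haddnorm : ∀ x ∈ C, ∀ y ∈ C, ‖x + y‖ = ‖x‖ + ‖y‖) :
    ∃ f : X → ℝ, ∀ x, ∀ y ∈ C, ∀ z ∈ C, x = y - z → f x = ‖y‖ - ‖z‖ := by
  choose Y hY Z hZ hYZ using hgen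
  exact ⟨fun x ↦ ‖Y x‖ - ‖Z x‖, fun x y hy z hz hx ↦
    norm_sub_norm_eq_of_sub_eq haddnorm (hY x) (hZ x) hy hz ((hYZ x).symm.trans hx)⟩

theorem exists_mem_ne_zero_of_generating (hgen : ∀ x : X, ∃ y ∈ C, ∃ z ∈ C, x = y - z)
    {x : X} (hx : x ≠ 0) : ∃ c ∈ C, c ≠ 0 := by
  obtain ⟨y, hy, z, hz, rfl⟩ := hgen x
  by_cases hy0 : y = 0
  · exact ⟨z, hz, fun hz0 ↦ hx (by rw [hy0, hz0, sub_zero])⟩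
  · exact ⟨y, hy, hy0⟩

variable {F : Type*} [FunLike F X ℝ] [AddMonoidHomClass F X ℝ]

theorem abs_apply_le_norm_of_eq_norm (hgen : ∀ x : X, ∃ y ∈ C, ∃ z ∈ C, x = y - z)
    {e : F} (he : ∀ x ∈ C, e x = ‖x‖) (x : X) : |e x| ≤ ‖x‖ := by
  obtain ⟨y, hy, z, hz, rfl⟩ := hgen x
  rw [map_sub, he y hy, he z hz]
  exact abs_norm_sub_norm_le y z

theorem eq_of_eq_norm (hgen : ∀ x : X, ∃ y ∈ C, ∃ z ∈ C, x = y - z)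
    {e e' : F} (he : ∀ x ∈ C, e x = ‖x‖) (he' : ∀ x ∈ C, e' x = ‖x‖) : e = e' := by
  refine DFunLike.ext e e' fun x ↦ ?_
  obtain ⟨y, hy, z, hz, rfl⟩ := hgen x
  rw [map_sub, map_sub, he y hy, he z hz, he' y hy, he' z hz]

variable [NormedSpace ℝ X]

theorem exists_linearMap_eq_norm (hadd : ∀ x ∈ C, ∀ y ∈ C, x + y ∈ C)
    (hsmul : ∀ (α : ℝ), 0 ≤ α → ∀ x ∈ C, α • x ∈ C)
    (hgen : ∀ x : X, ∃ y ∈ C, ∃ z ∈ C, x = y - z)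
    (haddnorm : ∀ x ∈ C, ∀ y ∈ C, ‖x + y‖ = ‖x‖ + ‖y‖) :
    ∃ f : X →ₗ[ℝ] ℝ, ∀ x ∈ C, f x = ‖x‖ := by
  obtain ⟨f, hf⟩ := exists_eq_norm_sub_norm hgen haddnorm
  have hmap_add (a b : X) : f (a + b) = f a + f b := by
    obtain ⟨y, hy, z, hz, rfl⟩ := hgen a
    obtain ⟨y', hy', z', hz', rfl⟩ := hgen b
    rw [hf _ (y + y') (hadd y hy y' hy') (z + z') (hadd z hz z' hz') (by abel),
      haddnorm y hy y' hy', haddnorm z hz z' hz', hf _ y hy z hz rfl, hf _ y' hy' z' hz' rfl]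
    ring
  have hmap_smul (α : ℝ) (x : X) : f (α • x) = α * f x := by
    obtain ⟨y, hy, z, hz, rfl⟩ := hgen x
    rw [hf _ y hy z hz rfl]
    rcases le_total 0 α with hα | hα
    · rw [hf _ (α • y) (hsmul α hα y hy) (α • z) (hsmul α hα z hz) (smul_sub α y z),
        norm_smul, norm_smul, Real.norm_of_nonneg hα]
      ring
    · have hα' : 0 ≤ -α := neg_nonneg.mpr hα
      rw [hf _ ((-α) • z) (hsmul _ hα' z hz) ((-α) • y) (hsmul _ hα' y hy) (by module),
        norm_smul, norm_smul, Real.norm_of_nonneg hα']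
      ring
  have hzero : (0 : X) ∈ C := by
    obtain ⟨y, hy, -⟩ := hgen 0
    simpa using hsmul 0 le_rfl y hy
  exact ⟨⟨⟨f, hmap_add⟩, hmap_smul⟩, fun x hx ↦ by simpa using hf x x hx 0 hzero (sub_zero x).symm⟩

theorem exists_continuousLinearMap_eq_norm (hadd : ∀ x ∈ C, ∀ y ∈ C, x + y ∈ C)
    (hsmul : ∀ (α : ℝ), 0 ≤ α → ∀ x ∈ C, α • x ∈ C)
    (hgen : ∀ x : X, ∃ y ∈ C, ∃ z ∈ C, x = y - z)
    (haddnorm : ∀ x ∈ C, ∀ y ∈ C, ‖x + y‖ = ‖x‖ + ‖y‖) :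
    ∃ e : X →L[ℝ] ℝ, ∀ x ∈ C, e x = ‖x‖ := by
  obtain ⟨f, hf⟩ := exists_linearMap_eq_norm hadd hsmul hgen haddnorm
  exact ⟨f.mkContinuous 1 fun x ↦ by simpa using abs_apply_le_norm_of_eq_norm hgen hf x, hf⟩

theorem ContinuousLinearMap.opNorm_eq_one_of_eq_norm
    (hgen : ∀ x : X, ∃ y ∈ C, ∃ z ∈ C, x = y - z)
    {e : X →L[ℝ] ℝ} (he : ∀ x ∈ C, e x = ‖x‖) {x : X} (hx : x ≠ 0) : ‖e‖ = 1 := by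
  refine le_antisymm (e.opNorm_le_bound zero_le_one fun x ↦ ?_) ?_
  · simpa using abs_apply_le_norm_of_eq_norm hgen he x
  · obtain ⟨c, hc, hc0⟩ := exists_mem_ne_zero_of_generating hgen hx
    calc (1 : ℝ) = ‖e c‖ / ‖c‖ := by
          rw [he c hc, norm_norm, div_self (norm_ne_zero_iff.mpr hc0)]
      _ ≤ ‖e‖ := e.ratio_le_opNorm c

end AdditiveNormCone

theorem norm_functional_exists_unique_general
    {X : Type*} [NormedAddCommGroup X] [NormedSpace ℝ X]
    (C : Set X)
    (hadd : ∀ x ∈ C, ∀ y ∈ C, x + y ∈ C)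
    (hsmul : ∀ (α : ℝ), 0 ≤ α → ∀ x ∈ C, α • x ∈ C)
    (hgen : ∀ x : X, ∃ y ∈ C, ∃ z ∈ C, x = y - z)
    (haddnorm : ∀ x ∈ C, ∀ y ∈ C, ‖x + y‖ = ‖x‖ + ‖y‖) :
    (∃! e : X →L[ℝ] ℝ, (∀ x ∈ C, 0 ≤ e x) ∧ ∀ x ∈ C, e x = ‖x‖) ∧
      ∀ e : X →L[ℝ] ℝ, (∀ x ∈ C, e x = ‖x‖) → (∃ x : X, x ≠ 0) → ‖e‖ = 1 := by
  obtain ⟨e, he⟩ := exists_continuousLinearMap_eq_norm hadd hsmul hgen haddnorm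
  refine ⟨⟨e, ⟨fun x hx ↦ he x hx ▸ norm_nonneg x, he⟩, ?_⟩, ?_⟩
  · rintro e' ⟨-, he'⟩
    exact eq_of_eq_norm hgen he' he
  · rintro e' he' ⟨x, hx⟩
    exact e'.opNorm_eq_one_of_eq_norm hgen he' hx

theorem norm_functional_exists_unique
    {X : Type*} [NormedAddCommGroup X] [NormedSpace ℝ X]
    (C : Set X) (hclosed : IsClosed C)
    (hadd : ∀ x ∈ C, ∀ y ∈ C, x + y ∈ C)
    (hsmul : ∀ (α : ℝ), 0 ≤ α → ∀ x ∈ C, α • x ∈ C)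
    (hconvex : Convex ℝ C)
    (hproper : C ∩ (-C) = {0})
    (hgen : ∀ x : X, ∃ y ∈ C, ∃ z ∈ C, x = y - z)
    (haddnorm : ∀ x ∈ C, ∀ y ∈ C, ‖x + y‖ = ‖x‖ + ‖y‖) :
    (∃! e : X →L[ℝ] ℝ, (∀ x ∈ C, 0 ≤ e x) ∧ ∀ x ∈ C, e x = ‖x‖) ∧
      ∀ e : X →L[ℝ] ℝ, (∀ x ∈ C, e x = ‖x‖) → (∃ x : X, x ≠ 0) → ‖e‖ = 1 :=
  norm_functional_exists_unique_general C hadd hsmul hgen haddnorm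
end

section
/- Let X be an AN-space with norm functional 𝟙. Then for every x'' in the bidual cone X''₊ one has ‖x''‖ = ⟨x'', 𝟙⟩. -/
/-!
On the cone, `|x' x| ≤ ‖x'‖ ‖x‖ = ‖x'‖ ⟨𝟙, x⟩`, so `‖x'‖ • 𝟙 ± x'` are both positive functionals and
positivity of `x''` gives `|x'' x'| ≤ ‖x'‖ ⟨x'', 𝟙⟩`, i.e. `‖x''‖ ≤ ⟨x'', 𝟙⟩`. Conversely `‖𝟙‖ ≤ 1`,
since `|⟨𝟙, y - z⟩| = |‖y‖ - ‖z‖| ≤ ‖y - z‖` for `y, z` in the generating cone.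
-/
lemma abs_apply_le_apply_of_add_mem_of_sub_mem {M F : Type*} [AddCommGroup M] [FunLike F M ℝ]
    [AddMonoidHomClass F M ℝ] (φ : F) {P : Set M} (hφ : ∀ m ∈ P, 0 ≤ φ m) {u v : M}
    (hadd : u + v ∈ P) (hsub : u - v ∈ P) : |φ v| ≤ φ u := by
  have h₁ := hφ _ hadd
  have h₂ := hφ _ hsub
  rw [map_add] at h₁
  rw [map_sub] at h₂
  exact abs_le.2 ⟨by linarith, by linarith⟩

section NormFunctional

variable {X : Type*} [NormedAddCommGroup X] [NormedSpace ℝ X] {C : Set X} {e : StrongDual ℝ X}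

lemma norm_le_one_of_apply_eq_norm (hgen : ∀ x : X, ∃ y ∈ C, ∃ z ∈ C, x = y - z)
    (he : ∀ x ∈ C, e x = ‖x‖) : ‖e‖ ≤ 1 := by
  refine e.opNorm_le_bound zero_le_one fun x => ?_
  obtain ⟨y, hy, z, hz, rfl⟩ := hgen x
  rw [map_sub, he y hy, he z hz, one_mul, Real.norm_eq_abs]
  exact abs_norm_sub_norm_le y z

lemma abs_apply_le_norm_mul_apply_of_apply_eq_norm (he : ∀ x ∈ C, e x = ‖x‖)
    (x' : StrongDual ℝ X) {x : X} (hx : x ∈ C) : |x' x| ≤ ‖x'‖ * e x := by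
  rw [he x hx, ← Real.norm_eq_abs]
  exact x'.le_opNorm x

lemma norm_smul_add_nonneg_on (he : ∀ x ∈ C, e x = ‖x‖) (x' : StrongDual ℝ X) :
    ∀ x ∈ C, 0 ≤ (‖x'‖ • e + x') x := fun x hx => by
  have := abs_apply_le_norm_mul_apply_of_apply_eq_norm he x' hx
  simp only [add_apply, smul_apply, smul_eq_mul]
  linarith [neg_abs_le (x' x)]

lemma norm_smul_sub_nonneg_on (he : ∀ x ∈ C, e x = ‖x‖) (x' : StrongDual ℝ X) :
    ∀ x ∈ C, 0 ≤ (‖x'‖ • e - x') x := fun x hx => by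
  have := abs_apply_le_norm_mul_apply_of_apply_eq_norm he x' hx
  simp only [sub_apply, smul_apply, smul_eq_mul]
  linarith [le_abs_self (x' x)]

end NormFunctional

theorem bidual_norm_eq_pairing_with_norm_functional_general
    {X : Type*} [NormedAddCommGroup X] [NormedSpace ℝ X]
    (C : Set X)
    (hgen : ∀ x : X, ∃ y ∈ C, ∃ z ∈ C, x = y - z)
    (e : StrongDual ℝ X) (he : ∀ x ∈ C, e x = ‖x‖) :
    ∀ x'' : StrongDual ℝ (StrongDual ℝ X),
      (∀ x' : StrongDual ℝ X, (∀ x ∈ C, 0 ≤ x' x) → 0 ≤ x'' x') →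
      ‖x''‖ = x'' e := by
  intro x'' hpos
  have he_nonneg : 0 ≤ x'' e := hpos e fun x hx => (he x hx).symm ▸ norm_nonneg x
  refine le_antisymm (x''.opNorm_le_bound he_nonneg fun x' => ?_) ?_
  · have hbound := abs_apply_le_apply_of_add_mem_of_sub_mem x''
      (P := {f : StrongDual ℝ X | ∀ x ∈ C, 0 ≤ f x}) (u := ‖x'‖ • e) hpos
      (norm_smul_add_nonneg_on he x') (norm_smul_sub_nonneg_on he x')
    rwa [map_smul, smul_eq_mul, ← Real.norm_eq_abs, mul_comm] at hbound
  · calc x'' e ≤ ‖x'' e‖ := le_abs_self _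
      _ ≤ ‖x''‖ * 1 := x''.le_opNorm_of_le (norm_le_one_of_apply_eq_norm hgen he)
      _ = ‖x''‖ := mul_one _

theorem bidual_norm_eq_pairing_with_norm_functional
    {X : Type*} [NormedAddCommGroup X] [NormedSpace ℝ X]
    (C : Set X) (hclosed : IsClosed C)
    (hadd : ∀ x ∈ C, ∀ y ∈ C, x + y ∈ C)
    (hsmul : ∀ (α : ℝ), 0 ≤ α → ∀ x ∈ C, α • x ∈ C)
    (hconvex : Convex ℝ C)
    (hproper : C ∩ (-C) = {0})
    (hgen : ∀ x : X, ∃ y ∈ C, ∃ z ∈ C, x = y - z)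
    (haddnorm : ∀ x ∈ C, ∀ y ∈ C, ‖x + y‖ = ‖x‖ + ‖y‖)
    (e : StrongDual ℝ X) (he : ∀ x ∈ C, e x = ‖x‖) :
    ∀ x'' : StrongDual ℝ (StrongDual ℝ X),
      (∀ x' : StrongDual ℝ X, (∀ x ∈ C, 0 ≤ x' x) → 0 ≤ x'' x') →
      ‖x''‖ = x'' e :=
  bidual_norm_eq_pairing_with_norm_functional_general C hgen e he
end

section
/- Let X be an ordered Banach space with generating cone and let ψ ∈ X' be a positive functional. Define ‖f‖_ψ = inf{⟨ψ, g + h⟩ : g, h ∈ X₊, f = g − h}. Then ‖·‖_ψ is a seminorm on X, it is additive on X₊ (with ‖f‖_ψ = ⟨ψ, f⟩ for f ∈ X₊), and ‖f‖_ψ ≤ 2C‖ψ‖·‖f‖ where C is the constant in the bounded decomposition property of the generating cone. If moreover inf{⟨ψ, f⟩ : f ∈ X₊, ‖f‖ = 1} > 0, then ‖·‖_ψ is a norm equivalent to the original norm. -/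
theorem renorming_seminorm_lemma
    {X : Type*} [NormedAddCommGroup X] [NormedSpace ℝ X]
    (C : Set X) (hclosed : IsClosed C)
    (hadd : ∀ x ∈ C, ∀ y ∈ C, x + y ∈ C)
    (hsmul : ∀ (α : ℝ), 0 ≤ α → ∀ x ∈ C, α • x ∈ C)
    (hconvex : Convex ℝ C)
    (hproper : C ∩ (-C) = {0})
    -- bounded decomposition property of the generating cone with constant C₀
    (C₀ : ℝ) (hC₀ : 0 < C₀)
    (hgen : ∀ x : X, ∃ y ∈ C, ∃ z ∈ C,
      x = y - z ∧ ‖y‖ ≤ C₀ * ‖x‖ ∧ ‖z‖ ≤ C₀ * ‖x‖)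
    (ψ : X →L[ℝ] ℝ) (hψ : ∀ x ∈ C, 0 ≤ ψ x)
    (p : X → ℝ)
    (hp : ∀ f : X, p f = sInf {r : ℝ | ∃ g ∈ C, ∃ h ∈ C, f = g - h ∧ r = ψ (g + h)}) :
    (∀ (a : ℝ) (f : X), p (a • f) = |a| * p f) ∧
    (∀ f g : X, p (f + g) ≤ p f + p g) ∧
    (∀ f ∈ C, p f = ψ f) ∧
    (∀ f ∈ C, ∀ g ∈ C, p (f + g) = p f + p g) ∧
    (∀ f : X, p f ≤ 2 * C₀ * ‖ψ‖ * ‖f‖) ∧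
    ((∃ δ > (0:ℝ), ∀ f ∈ C, ‖f‖ = 1 → δ ≤ ψ f) →
      ∃ c > (0:ℝ), ∀ f : X, c * ‖f‖ ≤ p f) := by
  set S : X → Set ℝ := fun f => {r : ℝ | ∃ g ∈ C, ∃ h ∈ C, f = g - h ∧ r = ψ (g + h)}
    with hSdef
  have h0mem : (0:X) ∈ C := by
    obtain ⟨y, hy, -⟩ := hgen 0
    simpa using hsmul 0 le_rfl y hy
  have hne : ∀ f, (S f).Nonempty := by
    intro f
    obtain ⟨y, hy, z, hz, hx, -, -⟩ := hgen f
    exact ⟨ψ (y + z), y, hy, z, hz, hx, rfl⟩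
  have hlb : ∀ f, ∀ r ∈ S f, (0:ℝ) ≤ r := by
    rintro f r ⟨g, hg, h, hh, -, rfl⟩
    exact hψ _ (hadd g hg h hh)
  have hbdd : ∀ f, BddBelow (S f) := fun f => ⟨0, fun r hr => hlb f r hr⟩
  have hnonneg : ∀ f, 0 ≤ p f := fun f => (hp f) ▸ le_csInf (hne f) (hlb f)
  have hle : ∀ (f g h : X), g ∈ C → h ∈ C → f = g - h → p f ≤ ψ (g + h) := by
    intro f g h hg hh hfe
    rw [hp f]
    exact csInf_le (hbdd f) ⟨g, hg, h, hh, hfe, rfl⟩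
  have hge : ∀ (f : X) (b : ℝ),
      (∀ g ∈ C, ∀ h ∈ C, f = g - h → b ≤ ψ (g + h)) → b ≤ p f := by
    intro f b hb
    rw [hp f]
    refine le_csInf (hne f) ?_
    rintro r ⟨g, hg, h, hh, hfe, rfl⟩
    exact hb g hg h hh hfe
  -- p = ψ on the cone
  have pC : ∀ f ∈ C, p f = ψ f := by
    intro f hf
    refine le_antisymm ?_ ?_
    · have := hle f f 0 hf h0mem (by simp)
      simpa using this
    · refine hge f (ψ f) ?_
      intro g hg h hh hfe
      have hh0 : 0 ≤ ψ h := hψ h hh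
      have : ψ f = ψ g - ψ h := by rw [hfe]; simp
      have h2 : ψ (g + h) = ψ g + ψ h := by simp
      linarith
  have p0 : p 0 = 0 := by
    have := pC 0 h0mem
    simpa using this
  -- homogeneity for positive scalars
  have hscale : ∀ a : ℝ, 0 < a → ∀ f : X, p (a • f) ≤ a * p f := by
    intro a ha f
    have h1 : p (a • f) / a ≤ sInf (S f) := by
      refine le_csInf (hne f) ?_
      rintro r ⟨g, hg, h, hh, rfl, rfl⟩
      rw [div_le_iff₀ ha]
      have key := hle (a • g - a • h) (a • g) (a • h)
        (hsmul a ha.le g hg) (hsmul a ha.le h hh) rfl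
      have heq : a • (g - h) = a • g - a • h := smul_sub a g h
      have heval : ψ (a • g + a • h) = ψ (g + h) * a := by
        rw [← smul_add, map_smul, smul_eq_mul]; ring
      rw [heq]
      linarith [key, heval.le, heval.ge]
    rw [← hp f] at h1
    have := (div_le_iff₀ ha).mp h1
    linarith
  have hposhom : ∀ a : ℝ, 0 < a → ∀ f : X, p (a • f) = a * p f := by
    intro a ha f
    refine le_antisymm (hscale a ha f) ?_
    have h2 := hscale a⁻¹ (inv_pos.mpr ha) (a • f)
    rw [inv_smul_smul₀ ha.ne' f] at h2
    have := mul_le_mul_of_nonneg_left h2 ha.le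
    rw [← mul_assoc, mul_inv_cancel₀ ha.ne', one_mul] at this
    exact this
  have hSneg : ∀ f : X, S (-f) = S f := by
    intro f
    ext r
    constructor <;> rintro ⟨g, hg, h, hh, hfe, rfl⟩
    · refine ⟨h, hh, g, hg, ?_, by rw [add_comm]⟩
      have := congrArg Neg.neg hfe
      simpa [neg_sub] using this
    · refine ⟨h, hh, g, hg, ?_, by rw [add_comm]⟩
      rw [hfe]; abel
  have hneg : ∀ f : X, p (-f) = p f := by
    intro f
    rw [hp (-f), hp f]
    exact congrArg sInf (hSneg f)
  have hhom : ∀ (a : ℝ) (f : X), p (a • f) = |a| * p f := by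
    intro a f
    rcases lt_trichotomy a 0 with h | h | h
    · have ha : 0 < -a := by linarith
      have heq : a • f = -((-a) • f) := by simp
      rw [heq, hneg, hposhom (-a) ha f, abs_of_neg h]
    · subst h; simp [p0]
    · rw [abs_of_pos h]; exact hposhom a h f
  -- subadditivity
  have hsub : ∀ f g : X, p (f + g) ≤ p f + p g := by
    intro f g
    have key : ∀ r ∈ S f, ∀ s ∈ S g, p (f + g) ≤ r + s := by
      rintro r ⟨a, ha, b, hb, rfl, rfl⟩ s ⟨c, hc, d, hd, rfl, rfl⟩
      have h1 := hle ((a - b) + (c - d)) (a + c) (b + d)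
        (hadd a ha c hc) (hadd b hb d hd) (by abel)
      have h2 : ψ ((a + c) + (b + d)) = ψ (a + b) + ψ (c + d) := by
        have : (a + c) + (b + d) = (a + b) + (c + d) := by abel
        rw [this]; simp
      linarith
    have h1 : p (f + g) - p f ≤ p g := by
      rw [hp g]
      refine le_csInf (hne g) fun s hs => ?_
      have h2 : p (f + g) - s ≤ p f := by
        rw [hp f]
        refine le_csInf (hne f) fun r hr => ?_
        linarith [key r hr s hs]
      linarith
    linarith
  -- additivity on the cone
  have haddC : ∀ f ∈ C, ∀ g ∈ C, p (f + g) = p f + p g := by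
    intro f hf g hg
    rw [pC f hf, pC g hg, pC (f + g) (hadd f hf g hg)]
    simp
  -- norm bound
  have hbound : ∀ f : X, p f ≤ 2 * C₀ * ‖ψ‖ * ‖f‖ := by
    intro f
    obtain ⟨y, hy, z, hz, hx, hny, hnz⟩ := hgen f
    have h1 := hle f y z hy hz hx
    have h2 : ψ (y + z) ≤ ‖ψ‖ * ‖y + z‖ := by
      calc ψ (y + z) ≤ |ψ (y + z)| := le_abs_self _
        _ = ‖ψ (y + z)‖ := (Real.norm_eq_abs _).symm
        _ ≤ ‖ψ‖ * ‖y + z‖ := ψ.le_opNorm _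
    have h3 : ‖y + z‖ ≤ 2 * C₀ * ‖f‖ := by
      calc ‖y + z‖ ≤ ‖y‖ + ‖z‖ := norm_add_le _ _
        _ ≤ 2 * C₀ * ‖f‖ := by linarith
    have h4 : ‖ψ‖ * ‖y + z‖ ≤ ‖ψ‖ * (2 * C₀ * ‖f‖) :=
      mul_le_mul_of_nonneg_left h3 (norm_nonneg _)
    calc p f ≤ ψ (y + z) := h1
      _ ≤ ‖ψ‖ * ‖y + z‖ := h2
      _ ≤ ‖ψ‖ * (2 * C₀ * ‖f‖) := h4
      _ = 2 * C₀ * ‖ψ‖ * ‖f‖ := by ring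
  refine ⟨hhom, hsub, pC, haddC, hbound, ?_⟩
  rintro ⟨δ, hδ, hδψ⟩
  refine ⟨δ, hδ, fun f => ?_⟩
  have hcone : ∀ g ∈ C, δ * ‖g‖ ≤ ψ g := by
    intro g hg
    rcases eq_or_ne g 0 with rfl | hg0
    · simp
    · have hng : 0 < ‖g‖ := norm_pos_iff.mpr hg0
      set u := ‖g‖⁻¹ • g with hu
      have hu1 : ‖u‖ = 1 := by
        rw [hu, norm_smul, norm_inv, norm_norm, inv_mul_cancel₀ hng.ne']
      have huC : u ∈ C := hsmul _ (inv_nonneg.mpr hng.le) g hg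
      have h1 := hδψ u huC hu1
      have h2 : ψ g = ‖g‖ * ψ u := by
        rw [hu, map_smul, smul_eq_mul, ← mul_assoc, mul_inv_cancel₀ hng.ne', one_mul]
      rw [h2]
      calc δ * ‖g‖ = ‖g‖ * δ := by ring
        _ ≤ ‖g‖ * ψ u := mul_le_mul_of_nonneg_left h1 hng.le
  refine hge f (δ * ‖f‖) ?_
  intro g hg h hh hfe
  have h1 : ‖f‖ ≤ ‖g‖ + ‖h‖ := by rw [hfe]; exact norm_sub_le _ _
  have h2 := hcone g hg
  have h3 := hcone h hh
  have h4 : ψ (g + h) = ψ g + ψ h := by simp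
  nlinarith [norm_nonneg g, norm_nonneg h]
end

section
/- Let X be an AN-space (ordered Banach space with generating cone and additive norm on the cone), let J = ℕ or J = [0,∞), and let f : J → X₊. Suppose f asymptotically dominates a constant vector x ∈ X₊ with ‖x‖ = 1 (i.e. d₊(f(t) − x) → 0 as t → ∞) and lim sup_{t→∞} ‖f(t)‖ ≤ 1. Then f(t) converges in norm to x as t → ∞. -/
open Filter

theorem asymptotic_lower_bound_implies_convergence_on_AN_space
    {X : Type*} [NormedAddCommGroup X] [NormedSpace ℝ X]
    (C : Set X) (hclosed : IsClosed C)
    (hadd : ∀ x ∈ C, ∀ y ∈ C, x + y ∈ C)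
    (hsmul : ∀ (α : ℝ), 0 ≤ α → ∀ x ∈ C, α • x ∈ C)
    (hconvex : Convex ℝ C)
    (hproper : C ∩ (-C) = {0})
    (hgen : ∀ x : X, ∃ y ∈ C, ∃ z ∈ C, x = y - z)
    (haddnorm : ∀ x ∈ C, ∀ y ∈ C, ‖x + y‖ = ‖x‖ + ‖y‖)
    (J : Set ℝ) (hJ : ¬ BddAbove J)
    (f : ℝ → X) (hf : ∀ t ∈ J, f t ∈ C)
    (x : X) (hx : x ∈ C) (hxnorm : ‖x‖ = 1)
    (hdom : Tendsto (fun t => Metric.infDist (f t - x) C) (atTop ⊓ 𝓟 J) (nhds 0))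
    (hlimsup : ∀ ε > (0:ℝ), ∀ᶠ t in atTop ⊓ 𝓟 J, ‖f t‖ ≤ 1 + ε) :
    Tendsto f (atTop ⊓ 𝓟 J) (nhds x) := by
  have h0 : (0:X) ∈ C := by
    have h : (0:X) ∈ C ∩ (-C) := by rw [hproper]; rfl
    exact h.1
  have hCne : C.Nonempty := ⟨0, h0⟩
  rw [Metric.tendsto_nhds]
  intro ε hε
  have h1 := (Metric.tendsto_nhds.mp hdom) (ε/4) (by positivity)
  have h2 := hlimsup (ε/4) (by positivity)
  filter_upwards [h1, h2] with t h1 h2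
  have hd : Metric.infDist (f t - x) C < ε/4 := by
    rw [Real.dist_eq, sub_zero] at h1
    exact (abs_lt.mp h1).2
  obtain ⟨c, hcC, hc⟩ := (Metric.infDist_lt_iff hCne).mp hd
  rw [dist_eq_norm] at hc
  have hxc : ‖x + c‖ = ‖x‖ + ‖c‖ := haddnorm x hx c hcC
  have hle : ‖x + c‖ ≤ ‖f t‖ + ‖f t - x - c‖ := by
    have he : x + c = f t - (f t - x - c) := by abel
    rw [he]; exact norm_sub_le _ _
  have hcnorm : ‖c‖ ≤ ε/2 := by
    rw [hxc, hxnorm] at hle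
    linarith
  rw [dist_eq_norm]
  have : ‖f t - x‖ ≤ ‖f t - x - c‖ + ‖c‖ := by
    simpa using norm_add_le (f t - x - c) c
  linarith
end

section
/- Let X be an ordered Banach space with normal cone X₊ (order intervals are norm bounded) such that X₊ has non-empty interior. Then X is reflexive if and only if every order interval [x, y] in X is weakly compact. -/
/-!
If `X` is reflexive, the canonical embedding identifies the weak topology of `X` with the
weak-star topology of the bidual, so by Banach–Alaoglu every bounded, closed, convex set is weakly
compact; order intervals are such sets by normality.

Conversely, if `u` is an interior point of the cone, the order interval `[-u, u]` contains a ball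
`closedBall 0 ρ`, which is therefore weakly compact. Its image in the bidual is then weak-star
closed and convex, and Hahn–Banach separation (weak-star continuous functionals on the bidual are
evaluations at points of `X*`) shows that it contains the whole ball of radius `ρ` of the bidual.
A subspace containing a ball is everything, so the embedding is surjective.
-/

open Metric Set Bornology NormedSpace

def orderInterval {E : Type*} [Sub E] (C : Set E) (x y : E) : Set E :=
  {z | z - x ∈ C ∧ y - z ∈ C}

theorem convex_orderInterval {E : Type*} [AddCommGroup E] [Module ℝ E] {C : Set E}
    (hC : Convex ℝ C) (x y : E) : Convex ℝ (orderInterval C x y) := by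
  have h : orderInterval C x y = (fun z => z + -x) ⁻¹' C ∩ (fun z => z + -y) ⁻¹' (-C) := by
    ext z
    simp [orderInterval, sub_eq_add_neg]
  rw [h]
  exact (hC.translate_preimage_left _).inter (hC.neg.translate_preimage_left _)

theorem isClosed_orderInterval {E : Type*} [AddGroup E] [TopologicalSpace E] [ContinuousSub E]
    {C : Set E} (hC : IsClosed C) (x y : E) : IsClosed (orderInterval C x y) :=
  (hC.preimage (continuous_id.sub continuous_const)).inter
    (hC.preimage (continuous_const.sub continuous_id))

theorem exists_closedBall_subset_orderInterval {E : Type*} [SeminormedAddCommGroup E]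
    {C : Set E} {u : E} (hu : u ∈ interior C) :
    ∃ ρ > 0, closedBall 0 ρ ⊆ orderInterval C (-u) u := by
  obtain ⟨r, hr, hball⟩ := Metric.isOpen_iff.1 isOpen_interior u hu
  have hmem : ∀ v : E, ‖v‖ ≤ r / 2 → u + v ∈ C := fun v hv =>
    interior_subset (hball (by rw [mem_ball, dist_eq_norm, add_sub_cancel_left]; linarith))
  refine ⟨r / 2, half_pos hr, fun v hv => ⟨?_, ?_⟩⟩
  · rw [sub_neg_eq_add, add_comm]
    exact hmem v (mem_closedBall_zero_iff.1 hv)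
  · rw [sub_eq_add_neg]
    exact hmem (-v) (by rwa [norm_neg, ← mem_closedBall_zero_iff])

theorem WeakDual.exists_forall_eq_apply {𝕜 V : Type*} [NontriviallyNormedField 𝕜]
    [AddCommGroup V] [TopologicalSpace V] [Module 𝕜 V] (f : StrongDual 𝕜 (WeakDual 𝕜 V)) :
    ∃ v : V, ∀ F : WeakDual 𝕜 V, f F = F v := by
  obtain ⟨v, hv⟩ := LinearMap.dualEmbedding_surjective (topDualPairing 𝕜 V)
    (f : StrongDual 𝕜 (WeakBilin (topDualPairing 𝕜 V)))
  exact ⟨v, fun F => (DFunLike.congr_fun hv F).symm⟩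

section Bidual

variable {X : Type*} [NormedAddCommGroup X] [NormedSpace ℝ X]

theorem Convex.isClosed_toWeakSpace_image {s : Set X} (hconv : Convex ℝ s) (hcl : IsClosed s) :
    IsClosed (toWeakSpace ℝ X '' s) := by
  rw [← hcl.closure_eq, hconv.toWeakSpace_closure ℝ]
  exact isClosed_closure

theorem isCompact_toWeakSpace_image_of_surjective
    (hJ : Function.Surjective (inclusionInDoubleDual ℝ X)) {s : Set X} (hb : IsBounded s)
    (hconv : Convex ℝ s) (hcl : IsClosed s) : IsCompact (toWeakSpace ℝ X '' s) := by
  rw [← (hconv.isClosed_toWeakSpace_image hcl).closure_eq]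
  refine isCompact_closure_of_isBounded ℝ X _
    (by rwa [(toWeakSpace ℝ X).injective.preimage_image]) fun F _ => ?_
  obtain ⟨x, hx⟩ := hJ (StrongDual.toWeakDual.symm F)
  exact ⟨toWeakSpace ℝ X x, congrArg StrongDual.toWeakDual hx⟩

theorem closedBall_subset_range_inclusionInDoubleDual {ρ : ℝ} (hρ : 0 < ρ)
    (hcl : IsClosed (inclusionInDoubleDualWeak ℝ X '' (toWeakSpace ℝ X '' closedBall 0 ρ))) :
    closedBall 0 ρ ⊆ range (inclusionInDoubleDual ℝ X) := by
  set K := inclusionInDoubleDualWeak ℝ X '' (toWeakSpace ℝ X '' closedBall 0 ρ)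
  have hconv : Convex ℝ K :=
    ((convex_closedBall 0 ρ).linear_image (toWeakSpace ℝ X).toLinearMap).linear_image
      (inclusionInDoubleDualWeak ℝ X).toLinearMap
  have : LocallyConvexSpace ℝ (WeakDual ℝ (StrongDual ℝ X)) :=
    WeakBilin.locallyConvexSpace (𝕜 := ℝ) (E := StrongDual ℝ (StrongDual ℝ X))
      (F := StrongDual ℝ X)
  intro G hG
  by_contra hGJ
  have hGK : StrongDual.toWeakDual G ∉ K := by
    rintro ⟨_, ⟨x, -, rfl⟩, hx⟩
    exact hGJ ⟨x, congrArg StrongDual.toWeakDual.symm hx⟩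
  obtain ⟨f, t, hfK, htG⟩ := geometric_hahn_banach_closed_point hconv hcl hGK
  obtain ⟨g, hfg⟩ := WeakDual.exists_forall_eq_apply f
  rw [hfg] at htG
  have hgt : ∀ x ∈ closedBall (0 : X) ρ, g x < t := fun x hx => by
    have h := hfK _ ⟨_, ⟨x, hx, rfl⟩, rfl⟩
    rwa [hfg] at h
  have hg : ‖g‖ ≤ t / ρ := by
    refine g.opNorm_bound_of_ball_bound hρ t fun x hx => abs_le.2 ⟨?_, (hgt x hx).le⟩
    have := hgt (-x) (by simpa using hx)
    rw [map_neg] at this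
    linarith
  have hGg : G g ≤ t := calc
    G g ≤ ‖G‖ * ‖g‖ := (le_abs_self _).trans (G.le_opNorm g)
    _ ≤ ρ * (t / ρ) := by
      gcongr
      exact (mem_closedBall_zero_iff (E := StrongDual ℝ (StrongDual ℝ X))).1 hG
    _ = t := mul_div_cancel₀ t hρ.ne'
  exact htG.not_ge hGg

theorem surjective_inclusionInDoubleDual_of_isCompact_closedBall {ρ : ℝ} (hρ : 0 < ρ)
    (hcomp : IsCompact (toWeakSpace ℝ X '' closedBall 0 ρ)) :
    Function.Surjective (inclusionInDoubleDual ℝ X) := by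
  have hball := closedBall_subset_range_inclusionInDoubleDual hρ
    (hcomp.image (inclusionInDoubleDualWeak ℝ X).continuous).isClosed
  have hrange :=
    (LinearMap.range (inclusionInDoubleDual ℝ X).toLinearMap).eq_top_of_nonempty_interior'
      ⟨0, mem_interior.2 ⟨ball 0 ρ, ball_subset_closedBall.trans hball, isOpen_ball,
        mem_ball_self hρ⟩⟩
  exact LinearMap.range_eq_top.1 hrange

end Bidual

theorem reflexive_iff_weakly_compact_order_intervals_general
    {X : Type*} [NormedAddCommGroup X] [NormedSpace ℝ X]
    (C : Set X) (hclosed : IsClosed C)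
    (hconvex : Convex ℝ C)
    (hnormal : ∀ x y : X, ∃ M : ℝ, ∀ z : X, z - x ∈ C → y - z ∈ C → ‖z‖ ≤ M)
    (hint : (interior C).Nonempty) :
    Function.Surjective (NormedSpace.inclusionInDoubleDual ℝ X) ↔
      ∀ x y : X, IsCompact (toWeakSpace ℝ X '' {z : X | z - x ∈ C ∧ y - z ∈ C}) := by
  refine ⟨fun hJ x y => ?_, fun hcomp => ?_⟩
  · obtain ⟨M, hM⟩ := hnormal x y
    exact isCompact_toWeakSpace_image_of_surjective hJ
      (isBounded_iff_forall_norm_le.2 ⟨M, fun z hz => hM z hz.1 hz.2⟩)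
      (convex_orderInterval hconvex x y) (isClosed_orderInterval hclosed x y)
  · obtain ⟨u, hu⟩ := hint
    obtain ⟨ρ, hρ, hball⟩ := exists_closedBall_subset_orderInterval hu
    exact surjective_inclusionInDoubleDual_of_isCompact_closedBall hρ
      ((hcomp (-u) u).of_isClosed_subset
        ((convex_closedBall 0 ρ).isClosed_toWeakSpace_image isClosed_closedBall)
        (image_mono hball))

theorem reflexive_iff_weakly_compact_order_intervals
    {X : Type*} [NormedAddCommGroup X] [NormedSpace ℝ X] [CompleteSpace X]
    (C : Set X) (hclosed : IsClosed C)
    (hadd : ∀ x ∈ C, ∀ y ∈ C, x + y ∈ C)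
    (hsmul : ∀ (α : ℝ), 0 ≤ α → ∀ x ∈ C, α • x ∈ C)
    (hconvex : Convex ℝ C)
    (hproper : C ∩ (-C) = {0})
    (hnormal : ∀ x y : X, ∃ M : ℝ, ∀ z : X, z - x ∈ C → y - z ∈ C → ‖z‖ ≤ M)
    (hint : (interior C).Nonempty) :
    Function.Surjective (NormedSpace.inclusionInDoubleDual ℝ X) ↔
      ∀ x y : X, IsCompact (toWeakSpace ℝ X '' {z : X | z - x ∈ C ∧ y - z ∈ C}) :=
  reflexive_iff_weakly_compact_order_intervals_general C hclosed hconvex hnormal hint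
end
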